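/- Let φ¹ = p₁ and φ^{k+1} = φ^k → p_{k+1}. Every closed simply typed lambda-term of type φ^k → φ^k is βη-convertible to the identity combinator λx.x. -/

import Mathlib

set_option autoImplicit true

namespace IPCStmt13

/-- Implicational formulas (simple types). -/
inductive ITy : Type
  | var : ℕ → ITy
  | imp : ITy → ITy → ITy
  deriving DecidableEq

/-- `impList [σ₁, …, σₙ] τ = σ₁ → ⋯ → σₙ → τ`. -/
def impList : List ITy → ITy → ITy
  | [], τ => τ
  | σ :: σs, τ => .imp σ (impList σs τ)

/-- The order of an implicational formula: `r(atom) = 0` and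
`r(σ → τ) = max (r σ + 1) (r τ)`, i.e. `r(σ₁→⋯→σₖ→p) = 1 + maxᵢ r(σᵢ)`. -/
def order : ITy → ℕ
  | .var _ => 0
  | .imp σ τ => max (order σ + 1) (order τ)

/-- Intuitionistic natural deduction for the implicational fragment (IIPC):
the rules (var), (→I), (→E). -/
inductive IDeriv : List ITy → ITy → Prop
  | ax {Γ φ} : φ ∈ Γ → IDeriv Γ φ
  | impI {Γ φ ψ} : IDeriv (φ :: Γ) ψ → IDeriv Γ (.imp φ ψ)
  | impE {Γ φ ψ} : IDeriv Γ (.imp φ ψ) → IDeriv Γ φ → IDeriv Γ ψ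

/-- Terms of the simply typed lambda-calculus (de Bruijn indices). -/
inductive LTm : Type
  | var : ℕ → LTm
  | lam : ITy → LTm → LTm
  | app : LTm → LTm → LTm
  deriving DecidableEq

/-- Shift de Bruijn indices `≥ d` up by one. -/
def lift (d : ℕ) : LTm → LTm
  | .var n => if n < d then .var n else .var (n + 1)
  | .lam σ M => .lam σ (lift (d + 1) M)
  | .app M N => .app (lift d M) (lift d N)

/-- Capture-free substitution `M[k := N]`. -/
def subst (k : ℕ) (N : LTm) : LTm → LTm
  | .var n => if n < k then .var n else if n = k then N else .var (n - 1)
  | .lam σ M => .lam σ (subst (k + 1) (lift 0 N) M)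
  | .app M P => .app (subst k N M) (subst k N P)

/-- Typing in the simply typed lambda-calculus: rules (var), (→I), (→E). -/
inductive ITyping : List ITy → LTm → ITy → Prop
  | var {Γ n σ} : Γ[n]? = some σ → ITyping Γ (.var n) σ
  | lam {Γ σ τ M} : ITyping (σ :: Γ) M τ → ITyping Γ (.lam σ M) (.imp σ τ)
  | app {Γ M N σ τ} : ITyping Γ M (.imp σ τ) → ITyping Γ N σ → ITyping Γ (.app M N) τ

/-- One-step β-reduction (contextual closure). -/
inductive BStep : LTm → LTm → Prop
  | beta {σ M N} : BStep (.app (.lam σ M) N) (subst 0 N M)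
  | lamc {σ M M'} : BStep M M' → BStep (.lam σ M) (.lam σ M')
  | appl {M M' N} : BStep M M' → BStep (.app M N) (.app M' N)
  | appr {M N N'} : BStep N N' → BStep (.app M N) (.app M N')

/-- A term is normal when it contains no β-redex. -/
def NormalB (M : LTm) : Prop := ∀ N : LTm, ¬ BStep M N

/-- One-step β- or η-reduction (contextual closure). -/
inductive BEStep : LTm → LTm → Prop
  | beta {σ M N} : BEStep (.app (.lam σ M) N) (subst 0 N M)
  | eta {σ M} : BEStep (.lam σ (.app (lift 0 M) (.var 0))) M
  | lamc {σ M M'} : BEStep M M' → BEStep (.lam σ M) (.lam σ M')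
  | appl {M M' N} : BEStep M M' → BEStep (.app M N) (.app M' N)
  | appr {M N N'} : BEStep N N' → BEStep (.app M N) (.app M N')

/-- βη-convertibility: the congruence generated by β- and η-reduction. -/
inductive Conv : LTm → LTm → Prop
  | step {M N} : BEStep M N → Conv M N
  | refl (M) : Conv M M
  | symm {M N} : Conv M N → Conv N M
  | trans {M N P} : Conv M N → Conv N P → Conv M P

/-- The target of an implicational formula. -/
def target : ITy → ℕ
  | .var p => p
  | .imp _ τ => target τ

/-- `phi k` is the formula `φᵏ`: `φ¹ = p₁` and `φᵏ⁺¹ = φᵏ → p_{k+1}`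
(the propositional variable `pᵢ` is `ITy.var i`). -/
def phi : ℕ → ITy
  | 0 => .var 0
  | 1 => .var 1
  | (k + 2) => .imp (phi (k + 1)) (.var (k + 2))

/-! ### Auxiliary development -/

/-- Renamings and parallel substitution machinery. -/
def ren (ξ : ℕ → ℕ) : LTm → LTm
  | .var n => .var (ξ n)
  | .lam σ M => .lam σ (ren (fun n => match n with | 0 => 0 | n+1 => ξ n + 1) M)
  | .app M N => .app (ren ξ M) (ren ξ N)

def upr (ξ : ℕ → ℕ) : ℕ → ℕ
  | 0 => 0
  | n+1 => ξ n + 1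

def msub (ρ : ℕ → LTm) : LTm → LTm
  | .var n => ρ n
  | .lam σ M => .lam σ (msub (fun n => match n with | 0 => .var 0 | n+1 => ren Nat.succ (ρ n)) M)
  | .app M N => .app (msub ρ M) (msub ρ N)

def ups (ρ : ℕ → LTm) : ℕ → LTm
  | 0 => .var 0
  | n+1 => ren Nat.succ (ρ n)

lemma ren_def (ξ : ℕ → ℕ) (σ M) : ren ξ (.lam σ M) = .lam σ (ren (upr ξ) M) := by
  have h : (fun n => match n with | 0 => 0 | n+1 => ξ n + 1) = upr ξ :=
    funext fun n => by cases n <;> rfl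
  show LTm.lam σ (ren (fun n => match n with | 0 => 0 | n+1 => ξ n + 1) M) = _
  rw [h]

lemma msub_def (ρ : ℕ → LTm) (σ M) : msub ρ (.lam σ M) = .lam σ (msub (ups ρ) M) := by
  have h : (fun n => match n with | 0 => .var 0 | n+1 => ren Nat.succ (ρ n)) = ups ρ :=
    funext fun n => by cases n <;> rfl
  show LTm.lam σ (msub (fun n => match n with | 0 => .var 0 | n+1 => ren Nat.succ (ρ n)) M) = _
  rw [h]

lemma ren_congr {ξ ζ : ℕ → ℕ} (M : LTm) (h : ∀ n, ξ n = ζ n) : ren ξ M = ren ζ M := by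
  induction M generalizing ξ ζ with
  | var n => simp [ren, h]
  | lam σ M ih =>
    rw [ren_def, ren_def]
    exact congrArg _ (ih (fun n => by cases n <;> simp [upr, h]))
  | app M N ihM ihN => simp only [ren]; rw [ihM h, ihN h]

lemma msub_congr {ρ ρ' : ℕ → LTm} (M : LTm) (h : ∀ n, ρ n = ρ' n) : msub ρ M = msub ρ' M := by
  induction M generalizing ρ ρ' with
  | var n => simp [msub, h]
  | lam σ M ih =>
    rw [msub_def, msub_def]
    exact congrArg _ (ih (fun n => by cases n <;> simp [ups, h]))
  | app M N ihM ihN => simp only [msub]; rw [ihM h, ihN h]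

lemma ren_ren (ξ ζ : ℕ → ℕ) (M : LTm) : ren ξ (ren ζ M) = ren (fun n => ξ (ζ n)) M := by
  induction M generalizing ξ ζ with
  | var n => rfl
  | lam σ M ih =>
    rw [ren_def, ren_def, ren_def, ih]
    exact congrArg _ (ren_congr M (fun n => by cases n <;> simp [upr]))
  | app M N ihM ihN => simp only [ren]; rw [ihM, ihN]

lemma msub_ren (ρ : ℕ → LTm) (ξ : ℕ → ℕ) (M : LTm) :
    msub ρ (ren ξ M) = msub (fun n => ρ (ξ n)) M := by
  induction M generalizing ρ ξ with
  | var n => rfl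
  | lam σ M ih =>
    rw [ren_def, msub_def, msub_def, ih]
    exact congrArg _ (msub_congr M (fun n => by cases n <;> simp [ups, upr]))
  | app M N ihM ihN => simp only [ren, msub]; rw [ihM, ihN]

lemma ren_msub (ξ : ℕ → ℕ) (ρ : ℕ → LTm) (M : LTm) :
    ren ξ (msub ρ M) = msub (fun n => ren ξ (ρ n)) M := by
  induction M generalizing ρ ξ with
  | var n => rfl
  | lam σ M ih =>
    rw [msub_def, ren_def, msub_def, ih]
    refine congrArg _ (msub_congr M (fun n => ?_))
    cases n with
    | zero => rfl
    | succ n =>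
      show ren (upr ξ) (ren Nat.succ (ρ n)) = ren Nat.succ (ren ξ (ρ n))
      rw [ren_ren, ren_ren]
      exact ren_congr _ (fun n => rfl)
  | app M N ihM ihN => simp only [ren, msub]; rw [ihM, ihN]

lemma msub_msub (ρ ρ' : ℕ → LTm) (M : LTm) :
    msub ρ (msub ρ' M) = msub (fun n => msub ρ (ρ' n)) M := by
  induction M generalizing ρ ρ' with
  | var n => rfl
  | lam σ M ih =>
    rw [msub_def, msub_def, msub_def, ih]
    refine congrArg _ (msub_congr M (fun n => ?_))
    cases n with
    | zero => rfl
    | succ n =>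
      show msub (ups ρ) (ren Nat.succ (ρ' n)) = ren Nat.succ (msub ρ (ρ' n))
      rw [msub_ren, ren_msub]
      exact msub_congr _ (fun n => rfl)
  | app M N ihM ihN => simp only [msub]; rw [ihM, ihN]

lemma msub_var (M : LTm) : msub .var M = M := by
  have : ∀ (ρ : ℕ → LTm), (∀ n, ρ n = .var n) → msub ρ M = M := by
    induction M with
    | var n => intro ρ h; simp [msub, h]
    | lam σ M ih =>
      intro ρ h
      rw [msub_def, ih (ups ρ) (fun n => by cases n <;> simp [ups, h, ren])]
    | app M N ihM ihN => intro ρ h; simp only [msub]; rw [ihM _ h, ihN _ h]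
  exact this _ (fun _ => rfl)

/-- `lift` is a renaming. -/
lemma lift_eq_ren (d : ℕ) (M : LTm) :
    lift d M = ren (fun n => if n < d then n else n + 1) M := by
  induction M generalizing d with
  | var n => simp [lift, ren]; split <;> rfl
  | lam σ M ih =>
    rw [lift, ren_def, ih]
    exact congrArg _ (ren_congr M (fun n => by
      cases n with
      | zero => simp [upr]
      | succ n => simp [upr, Nat.succ_lt_succ_iff]; split <;> rfl))
  | app M N ihM ihN => simp only [lift, ren]; rw [ihM, ihN]

lemma lift0_eq (M : LTm) : lift 0 M = ren Nat.succ M := by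
  rw [lift_eq_ren]; exact ren_congr M (fun n => by simp)

/-- cons for substitutions -/
def scons (N : LTm) (ρ : ℕ → LTm) : ℕ → LTm
  | 0 => N
  | n+1 => ρ n

/-- `subst` is a parallel substitution. -/
lemma subst_eq_msub (k : ℕ) (N : LTm) (M : LTm) :
    subst k N M = msub (fun n => if n < k then .var n else if n = k then N else .var (n-1)) M := by
  induction M generalizing k N with
  | var n => simp [subst, msub]
  | lam σ M ih =>
    rw [subst, msub_def, ih]
    refine congrArg _ (msub_congr M (fun n => ?_))
    cases n with
    | zero => simp [ups]
    | succ n =>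
      simp only [ups, Nat.succ_lt_succ_iff]
      by_cases h1 : n < k
      · simp [h1, ren]
      · by_cases h2 : n = k
        · simp [h1, h2, lift0_eq]
        · simp [h1, h2, ren]
          congr 1
          omega
  | app M P ihM ihP => simp only [subst, msub]; rw [ihM, ihP]

lemma subst0_eq (N M : LTm) : subst 0 N M = msub (scons N .var) M := by
  rw [subst_eq_msub]
  exact msub_congr M (fun n => by cases n <;> rfl)

/-- Key composition: substituting into a term under `ups ρ`. -/
lemma subst0_msub_ups (N : LTm) (ρ : ℕ → LTm) (M : LTm) :
    subst 0 N (msub (ups ρ) M) = msub (scons N ρ) M := by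
  rw [subst0_eq, msub_msub]
  refine msub_congr M (fun n => ?_)
  cases n with
  | zero => rfl
  | succ n =>
    show msub (scons N .var) (ren Nat.succ (ρ n)) = ρ n
    rw [msub_ren]
    have : (fun m => scons N LTm.var (Nat.succ m)) = LTm.var := by funext m; rfl
    rw [this, msub_var]

lemma msub_subst0 (ρ : ℕ → LTm) (N M : LTm) :
    msub ρ (subst 0 N M) = subst 0 (msub ρ N) (msub (ups ρ) M) := by
  rw [subst0_msub_ups, subst0_eq, msub_msub]
  exact msub_congr M (fun n => by cases n <;> rfl)

/-- β-steps are preserved by parallel substitution. -/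
lemma bstep_msub {M M' : LTm} (h : BStep M M') (ρ : ℕ → LTm) :
    BStep (msub ρ M) (msub ρ M') := by
  induction h generalizing ρ with
  | @beta σ M N =>
    rw [msub_subst0]
    show BStep (msub ρ (.app (.lam σ M) N)) _
    rw [msub, msub_def]
    exact BStep.beta
  | lamc h ih => rw [msub_def, msub_def]; exact BStep.lamc (ih _)
  | appl h ih => exact BStep.appl (ih _)
  | appr h ih => exact BStep.appr (ih _)

/-! ### Typing lemmas -/

lemma ITyping.ren {Γ Δ : List ITy} {M σ} (h : ITyping Γ M σ) (ξ : ℕ → ℕ)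
    (hξ : ∀ n τ, Γ[n]? = some τ → Δ[ξ n]? = some τ) :
    ITyping Δ (ren ξ M) σ := by
  induction h generalizing Δ ξ with
  | var hn => exact ITyping.var (hξ _ _ hn)
  | @lam Γ σ τ M _ ih =>
    rw [ren_def]
    refine ITyping.lam (ih (upr ξ) (fun n τ' hn => ?_))
    cases n with
    | zero => exact hn
    | succ n => exact hξ n τ' hn
  | app _ _ ihM ihN => exact ITyping.app (ihM _ hξ) (ihN _ hξ)

lemma ITyping.msub {Γ Δ : List ITy} {M σ} (h : ITyping Γ M σ) (ρ : ℕ → LTm)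
    (hρ : ∀ n τ, Γ[n]? = some τ → ITyping Δ (ρ n) τ) :
    ITyping Δ (msub ρ M) σ := by
  induction h generalizing Δ ρ with
  | var hn => exact hρ _ _ hn
  | @lam Γ σ τ M _ ih =>
    rw [msub_def]
    refine ITyping.lam (ih (ups ρ) (fun n τ' hn => ?_))
    cases n with
    | zero => exact ITyping.var hn
    | succ n => exact (hρ n τ' hn).ren Nat.succ (fun m τ'' hm => hm)
  | app _ _ ihM ihN => exact ITyping.app (ihM _ hρ) (ihN _ hρ)

lemma ITyping.subst0 {Γ : List ITy} {M N σ τ} (hM : ITyping (σ :: Γ) M τ)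
    (hN : ITyping Γ N σ) : ITyping Γ (subst 0 N M) τ := by
  rw [subst0_eq]
  exact hM.msub _ (fun n τ' hn => by
    cases n with
    | zero => cases hn; exact hN
    | succ n => exact ITyping.var hn)

/-- Subject reduction. -/
lemma ITyping.bstep {Γ M M' σ} (h : ITyping Γ M σ) (hs : BStep M M') : ITyping Γ M' σ := by
  induction hs generalizing Γ σ with
  | beta =>
    rcases h with _ | _ | ⟨hf, ha⟩
    rcases hf with _ | ⟨hb⟩ | _
    exact hb.subst0 ha
  | lamc _ ih =>
    rcases h with _ | ⟨hb⟩ | _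
    exact ITyping.lam (ih hb)
  | appl _ ih =>
    rcases h with _ | _ | ⟨hf, ha⟩
    exact ITyping.app (ih hf) ha
  | appr _ ih =>
    rcases h with _ | _ | ⟨hf, ha⟩
    exact ITyping.app hf (ih ha)

/-! ### Strong normalization via reducibility -/

def SN (M : LTm) : Prop := Acc (fun a b => BStep b a) M

lemma sn_var (n : ℕ) : SN (.var n) :=
  Acc.intro _ (fun _ h => by cases h)

lemma sn_app_left {M N : LTm} (h : SN (.app M N)) : SN M := by
  have : ∀ P, SN P → ∀ M N, P = .app M N → SN M := by
    intro P h
    induction h with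
    | intro P _ ih =>
      rintro M N rfl
      exact Acc.intro _ (fun M' hM' => ih _ (BStep.appl hM') M' N rfl)
  exact this _ h M N rfl

lemma sn_of_msub {ρ : ℕ → LTm} {M : LTm} (h : SN (msub ρ M)) : SN M := by
  have : ∀ P, SN P → ∀ M, P = msub ρ M → SN M := by
    intro P h
    induction h with
    | intro P _ ih =>
      rintro M rfl
      exact Acc.intro _ (fun M' hM' => ih _ (bstep_msub hM' ρ) M' rfl)
  exact this _ h M rfl

def Red : ITy → LTm → Prop
  | .var _, M => SN M
  | .imp σ τ, M => ∀ N, Red σ N → Red τ (.app M N)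

def Neutral : LTm → Prop
  | .lam _ _ => False
  | _ => True

lemma red_step {σ M M'} (h : Red σ M) (hs : BStep M M') : Red σ M' := by
  induction σ generalizing M M' with
  | var p => exact h.inv hs
  | imp σ τ ihσ ihτ =>
    intro N hN
    exact ihτ (h N hN) (BStep.appl hs)

mutual
lemma red_sn : ∀ (σ : ITy) (M : LTm), Red σ M → SN M
  | .var _, M, h => h
  | .imp σ τ, M, h => by
    have hv : Red σ (.var 0) := red_neutral σ trivial (fun M' h' => by cases h')
    exact sn_app_left (red_sn τ _ (h _ hv))

lemma red_neutral : ∀ (σ : ITy) {M : LTm}, Neutral M → (∀ M', BStep M M' → Red σ M') → Red σ M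
  | .var _, M, hne, h => Acc.intro _ (fun M' hM' => red_sn _ _ (h M' hM'))
  | .imp σ τ, M, hne, h => by
    intro N hN
    have hsnN : SN N := red_sn σ N hN
    induction hsnN with
    | intro N _ ihN =>
      refine red_neutral τ trivial (fun P hP => ?_)
      cases hP with
      | beta => exact hne.elim
      | appl h' => exact h _ h' _ hN
      | @appr _ _ N' h' => exact ihN N' h' (red_step hN h')
end

lemma red_var0 (σ : ITy) : Red σ (.var 0) :=
  red_neutral σ trivial (fun _ h' => by cases h')

lemma red_lam_aux {σ τ : ITy} {σ' : ITy} :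
    ∀ M, SN M → ∀ N, SN N →
    (∀ P, Red σ P → Red τ (subst 0 P M)) → Red σ N → Red τ (.app (.lam σ' M) N) := by
  intro M hM
  induction hM with
  | intro M hMsub ihM =>
    intro N hN
    induction hN with
    | intro N hNsub ihN =>
      intro h hNred
      refine red_neutral τ trivial (fun P hP => ?_)
      cases hP with
      | beta => exact h N hNred
      | appl h' =>
        cases h' with
        | lamc h'' =>
          refine ihM _ h'' N (Acc.intro _ hNsub) (fun P hP => ?_) hNred
          refine red_step (h P hP) ?_
          rw [subst0_eq, subst0_eq]
          exact bstep_msub h'' _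
      | appr h' => exact ihN _ h' h (red_step hNred h')

lemma red_lam {σ τ σ' : ITy} {M : LTm}
    (h : ∀ N, Red σ N → Red τ (subst 0 N M)) : Red (.imp σ τ) (.lam σ' M) := by
  intro N hN
  have hsnM : SN M := by
    have := red_sn τ _ (h (.var 0) (red_var0 σ))
    rw [subst0_eq] at this
    exact sn_of_msub this
  exact red_lam_aux M hsnM N (red_sn σ N hN) h hN

/-! ### Fundamental lemma and weak normalization -/

lemma red_fundamental {Γ : List ITy} {M σ} (h : ITyping Γ M σ) (ρ : ℕ → LTm)
    (hρ : ∀ n τ, Γ[n]? = some τ → Red τ (ρ n)) : Red σ (msub ρ M) := by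
  induction h generalizing ρ with
  | var hn => exact hρ _ _ hn
  | @lam Γ σ τ M _ ih =>
    rw [msub_def]
    refine red_lam (fun N hN => ?_)
    rw [subst0_msub_ups]
    refine ih (scons N ρ) (fun n τ' hn => ?_)
    cases n with
    | zero => cases hn; exact hN
    | succ n => exact hρ n τ' hn
  | @app Γ M N σ τ _ _ ihM ihN =>
    exact ihM ρ hρ (msub ρ N) (ihN ρ hρ)

lemma sn_of_typed {M σ} (h : ITyping [] M σ) : SN M := by
  have := red_fundamental h LTm.var (fun n τ hn => by simp at hn)
  rw [msub_var] at this
  exact red_sn σ M this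

lemma bstep_be {M N : LTm} (h : BStep M N) : BEStep M N := by
  induction h with
  | beta => exact BEStep.beta
  | lamc _ ih => exact BEStep.lamc ih
  | appl _ ih => exact BEStep.appl ih
  | appr _ ih => exact BEStep.appr ih

lemma exists_normal {M : LTm} (h : SN M) :
    ∃ N, Conv M N ∧ NormalB N ∧ (∀ Γ σ, ITyping Γ M σ → ITyping Γ N σ) := by
  induction h with
  | intro M hsub ih =>
    by_cases hn : ∃ M', BStep M M'
    · obtain ⟨M', hM'⟩ := hn
      obtain ⟨N, h1, h2, h3⟩ := ih M' hM'
      exact ⟨N, Conv.trans (Conv.step (bstep_be hM')) h1, h2,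
        fun Γ σ hty => h3 _ _ (hty.bstep hM')⟩
    · exact ⟨M, Conv.refl M, fun N hN => hn ⟨N, hN⟩, fun _ _ h => h⟩

/-! ### Conv congruence lemmas -/

lemma Conv.lamc {σ M N} (h : Conv M N) : Conv (.lam σ M) (.lam σ N) := by
  induction h with
  | step h => exact Conv.step (BEStep.lamc h)
  | refl M => exact Conv.refl _
  | symm _ ih => exact Conv.symm ih
  | trans _ _ ih1 ih2 => exact Conv.trans ih1 ih2

lemma Conv.apprc {M N N'} (h : Conv N N') : Conv (.app M N) (.app M N') := by
  induction h with
  | step h => exact Conv.step (BEStep.appr h)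
  | refl M => exact Conv.refl _
  | symm _ ih => exact Conv.symm ih
  | trans _ _ ih1 ih2 => exact Conv.trans ih1 ih2

/-! ### Facts about `phi` -/

lemma target_phi : ∀ k, 1 ≤ k → target (phi k) = k
  | 1, _ => rfl
  | k+2, _ => rfl

lemma phi_inj {i j : ℕ} (hi : 1 ≤ i) (hj : 1 ≤ j) (h : phi i = phi j) : i = j := by
  have := congrArg target h
  rwa [target_phi i hi, target_phi j hj] at this

lemma phi_succ {j : ℕ} (hj : 2 ≤ j) : phi j = .imp (phi (j-1)) (.var j) := by
  obtain ⟨m, rfl⟩ : ∃ m, j = m + 2 := ⟨j - 2, by omega⟩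
  rfl

lemma phi_ne_var {j i : ℕ} (hj : 2 ≤ j) : phi j ≠ .var i := by
  rw [phi_succ hj]; exact fun h => by cases h

/-- Contexts `[φʲ, φʲ⁺¹, …]`. -/
def ctxA : ℕ → ℕ → List ITy
  | 0, _ => []
  | m+1, j => phi j :: ctxA m (j+1)

lemma ctxA_get? : ∀ m j n, (ctxA m j)[n]? = if n < m then some (phi (j + n)) else none := by
  intro m
  induction m with
  | zero => intro j n; simp [ctxA]
  | succ m ih =>
    intro j n
    cases n with
    | zero => simp [ctxA]
    | succ n =>
      show (ctxA m (j+1))[n]? = _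
      rw [ih]
      by_cases h : n < m
      · simp [h, Nat.succ_lt_succ h]
        congr 1
        omega
      · simp [h, fun hh : n + 1 < m + 1 => h (Nat.lt_of_succ_lt_succ hh)]

/-! ### Normal form structure -/

lemma normal_app_left {M N} (h : NormalB (.app M N)) : NormalB M :=
  fun P hP => h _ (BStep.appl hP)

lemma normal_app_right {M N} (h : NormalB (.app M N)) : NormalB N :=
  fun P hP => h _ (BStep.appr hP)

lemma normal_lam_body {σ M} (h : NormalB (.lam σ M)) : NormalB M :=
  fun P hP => h _ (BStep.lamc hP)

/-- Spine lemma: a normal non-abstraction in a `phi`-context is a variable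
or a variable applied to one argument. -/
lemma spine : ∀ (M : LTm) {Γ : List ITy} {τ : ITy}, ITyping Γ M τ → NormalB M →
    (∀ (n : ℕ) σ, Γ[n]? = some σ → ∃ i, 1 ≤ i ∧ σ = phi i) →
    (∀ σ P, M ≠ LTm.lam σ P) →
    (∃ n, M = .var n ∧ Γ[n]? = some τ) ∨
    (∃ n Q i, 2 ≤ i ∧ M = .app (.var n) Q ∧ Γ[n]? = some (phi i) ∧ τ = .var i ∧
      ITyping Γ Q (phi (i-1)) ∧ NormalB Q) := by
  intro M
  induction M with
  | var n =>
    intro Γ τ hty _ _ _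
    cases hty with
    | var hn => exact Or.inl ⟨n, rfl, hn⟩
  | lam σ P _ =>
    intro Γ τ _ _ _ hlam
    exact absurd rfl (hlam σ P)
  | app M Q ihM _ =>
    intro Γ τ hty hnorm hΓ _
    cases hty with
    | @app _ _ _ σ τ hf ha =>
      have hMnorm : NormalB M := normal_app_left hnorm
      have hMnotlam : ∀ σ' P, M ≠ LTm.lam σ' P := by
        rintro σ' P rfl
        exact hnorm _ BStep.beta
      rcases ihM hf hMnorm hΓ hMnotlam with ⟨n, rfl, hn⟩ | ⟨n, Q', i, _, _, _, hτ, _, _⟩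
      · obtain ⟨i, hi1, hi2⟩ := hΓ n _ hn
        have hi2' : 2 ≤ i := by
          rcases Nat.lt_or_ge i 2 with h | h
          · exfalso
            have hi1' : i = 1 := by omega
            rw [hi1'] at hi2
            exact absurd hi2 (fun h => by cases h)
          · exact h
        rw [phi_succ hi2'] at hi2
        cases hi2
        refine Or.inr ⟨n, Q, i, hi2', rfl, by rw [hn, phi_succ hi2'], rfl, ha, normal_app_right hnorm⟩
      · exact absurd hτ (by exact fun h => by cases h)

/-- Classification: a normal inhabitant of `φʲ` in context `[φʲ,…,φᵏ]` is
convertible to the variable `0`. -/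
lemma classify : ∀ (s : ℕ) (N : LTm), sizeOf N ≤ s → ∀ (j k : ℕ), 1 ≤ j → j ≤ k →
    NormalB N → ITyping (ctxA (k+1-j) j) N (phi j) → Conv N (.var 0) := by
  intro s
  induction s with
  | zero =>
    intro N hs
    cases N <;> simp at hs
  | succ s ih =>
    intro N hs j k hj1 hjk hnorm hty
    have hΓ : ∀ (n : ℕ) σ, (ctxA (k+1-j) j)[n]? = some σ → ∃ i, 1 ≤ i ∧ σ = phi i := by
      intro n σ hn
      rw [ctxA_get?] at hn
      by_cases h : n < k+1-j
      · simp [h] at hn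
        exact ⟨j + n, by omega, hn.symm⟩
      · simp [h] at hn
    cases N with
    | var n =>
      cases hty with
      | var hn =>
        rw [ctxA_get?] at hn
        by_cases h : n < k+1-j
        · simp [h] at hn
          have := phi_inj (by omega) hj1 hn
          have : n = 0 := by omega
          subst this
          exact Conv.refl _
        · simp [h] at hn
    | lam σ P =>
      -- `phi j` must be an implication, so `j ≥ 2`
      have hj2 : 2 ≤ j := by
        rcases Nat.lt_or_ge j 2 with h | h
        · exfalso
          have hj1' : j = 1 := by omega
          rw [hj1', show phi 1 = ITy.var 1 from rfl] at hty
          cases hty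
        · exact h
      rw [phi_succ hj2] at hty
      cases hty with
      | lam hb =>
        -- context for the body is `ctxA (k+2-j) (j-1)`
        have hctx : phi (j-1) :: ctxA (k+1-j) j = ctxA (k+1-(j-1)) (j-1) := by
          have h1 : k+1-(j-1) = (k+1-j) + 1 := by omega
          have h2 : (j-1) + 1 = j := by omega
          rw [h1]
          show _ = phi (j-1) :: ctxA (k+1-j) ((j-1)+1)
          rw [h2]
        rw [hctx] at hb
        have hPnorm : NormalB P := normal_lam_body hnorm
        have hPnotlam : ∀ σ' P', P ≠ LTm.lam σ' P' := by
          rintro σ' P' rfl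
          cases hb
        have hΓ' : ∀ (n : ℕ) σ', (ctxA (k+1-(j-1)) (j-1))[n]? = some σ' → ∃ i, 1 ≤ i ∧ σ' = phi i := by
          intro n σ' hn
          rw [ctxA_get?] at hn
          by_cases h : n < k+1-(j-1)
          · simp [h] at hn
            exact ⟨(j-1) + n, by omega, hn.symm⟩
          · simp [h] at hn
        rcases spine P hb hPnorm hΓ' hPnotlam with ⟨n, rfl, hn⟩ | ⟨n, Q, i, hi2, rfl, hn, hτ, hQty, hQnorm⟩
        · -- a variable cannot have the atomic type `var j` here
          rw [ctxA_get?] at hn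
          by_cases h : n < k+1-(j-1)
          · simp [h] at hn
            rcases Nat.lt_or_ge ((j-1)+n) 2 with h2 | h2
            · have h3 : (j-1)+n = 1 := by omega
              rw [h3] at hn
              have := ITy.var.inj hn
              omega
            · exact absurd hn (phi_ne_var h2)
          · simp [h] at hn
        · -- `P = (var n) Q` with `var n : phi j`, so `n = 1`
          have hij : j = i := ITy.var.inj hτ
          subst hij
          rw [ctxA_get?] at hn
          by_cases h : n < k+1-(j-1)
          · simp [h] at hn
            have := phi_inj (by omega) (by omega) hn
            have hn1 : n = 1 := by omega
            subst hn1
            -- recurse on Q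
            have hQconv : Conv Q (.var 0) := by
              refine ih Q (by simp at hs; omega) (j-1) k (by omega) (by omega) hQnorm ?_
              exact hQty
            have hlift : lift 0 (LTm.var 0) = LTm.var 1 := rfl
            refine Conv.trans (Conv.lamc (Conv.apprc hQconv)) ?_
            refine Conv.step ?_
            rw [show LTm.var 1 = lift 0 (LTm.var 0) from rfl]
            exact BEStep.eta
          · simp [h] at hn
    | app M Q =>
      have hnotlam : ∀ σ' P', LTm.app M Q ≠ LTm.lam σ' P' := by intro _ _ h; cases h
      rcases spine _ hty hnorm hΓ hnotlam with ⟨n, hn, _⟩ | ⟨n, Q', i, hi2, _, _, hτ, _, _⟩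
      · cases hn
      · -- `phi j = var i` forces `j = 1`, `i = 1`, contradicting `i ≥ 2`
        rcases Nat.lt_or_ge j 2 with h | h
        · have hj1' : j = 1 := by omega
          rw [hj1'] at hτ
          have := ITy.var.inj hτ
          omega
        · exact absurd hτ (phi_ne_var h)

/-- every closed simply typed lambda-term of type `φᵏ → φᵏ`
is βη-convertible to the identity combinator `λx.x`. -/
theorem closed_term_of_phi_imp_phi_is_id {k : ℕ} (hk : 1 ≤ k) {M : LTm}
    (hM : ITyping [] M (.imp (phi k) (phi k))) :
    Conv M (.lam (phi k) (.var 0)) := by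
  obtain ⟨N, hconv, hnorm, hty⟩ := exists_normal (sn_of_typed hM)
  have hNty := hty _ _ hM
  cases N with
  | var n =>
    cases hNty with
    | var hn => simp at hn
  | app P Q =>
    rcases spine _ hNty hnorm (fun n σ hn => by simp at hn)
        (fun _ _ h => by cases h) with
      ⟨n, hn, _⟩ | ⟨n, Q', i, _, _, hget, _, _, _⟩
    · cases hn
    · simp at hget
  | lam σ P =>
    cases hNty with
    | lam hb =>
      have hctx : [phi k] = ctxA (k+1-k) k := by
        have h1 : k+1-k = 1 := by omega
        rw [h1]
        rfl
      rw [hctx] at hb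
      exact Conv.trans hconv
        (Conv.lamc (classify (sizeOf P) P le_rfl k k hk le_rfl (normal_lam_body hnorm) hb))

end IPCStmt13
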